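/- The class of Dehn–Sommerville graphs is closed under the Zykov join: if G ∈ X_d and H ∈ X_e, then G + H ∈ X_{d+e+1}, where the classes X_d are defined recursively by X_{-1} = {empty graph} and X_{d+1} = {G : χ(G) = 1 + (−1)^{d+1} and the sphere S(x) belongs to X_d for every vertex x}. -/

import Mathlib

open SimpleGraph

/-- The Zykov join of two graphs: disjoint union plus all cross edges. -/
def zykovJoin {α β : Type} (G : SimpleGraph α) (H : SimpleGraph β) :
    SimpleGraph (α ⊕ β) where
  Adj x y := (G.sum H).Adj x y ∨ x.isLeft ≠ y.isLeft
  symm := by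
    constructor
    intro x y h
    rcases h with h | h
    · exact Or.inl ((G.sum H).adj_symm h)
    · exact Or.inr (Ne.symm h)
  loopless := by
    constructor
    intro x h
    rcases h with h | h
    · exact (G.sum H).irrefl h
    · exact h rfl

/-- `fVec G k` is the number of `(k+1)`-cliques of `G`. -/
noncomputable def fVec {α : Type} (G : SimpleGraph α) (k : ℕ) : ℕ :=
  Nat.card {s : Finset α // G.IsNClique (k + 1) s}

/-- The Euler characteristic of the clique complex of `G`:
`χ(G) = f₀ - f₁ + f₂ - ⋯`. -/
noncomputable def eulerChar {α : Type} (G : SimpleGraph α) : ℤ :=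
  ∑ k ∈ Finset.range (Nat.card α), (-1 : ℤ) ^ k * fVec G k

/-- `DS m G` means that `G` belongs to the Dehn–Sommerville class `X_{m-1}`:
`X_{-1} = DS 0` consists of the empty graph, and `G ∈ X_d = DS (d+1)` iff
`χ(G) = 1 + (-1)^d` and the sphere (link) of every vertex lies in `X_{d-1}`. -/
def DS : ℕ → {α : Type} → SimpleGraph α → Prop
  | 0, α, _ => IsEmpty α
  | n + 1, α, G =>
      eulerChar G = 1 + (-1 : ℤ) ^ n ∧
      ∀ x : α, DS n (G.induce (G.neighborSet x))

/-! Induction on `m + n`. Writing `1 - χ(G)` as the signed count `∑ (-1)^|s|` over all cliques `s`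
of `G`, the empty one included, and noting that the cliques of `G + H` are exactly the disjoint
unions of a clique of `G` and a clique of `H`, gives `1 - χ(G + H) = (1 - χ(G)) (1 - χ(H))`, which
is the Euler characteristic condition. The sphere of a vertex `x` of `G` in `G + H` is `S(x) + H`
(and symmetrically for `H`), so the sphere condition is the induction hypothesis. When one factor
is the empty graph, `G + H` is the other factor. -/

namespace SimpleGraph.Iso

variable {α β : Type} {G : SimpleGraph α} {G' : SimpleGraph β}

theorem isNClique_map_iff (e : G ≃g G') {n : ℕ} {s : Finset α} :
    G'.IsNClique n (s.map e.toEquiv.toEmbedding) ↔ G.IsNClique n s := by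
  simp [isNClique_iff, isClique_iff, Set.Pairwise, e.map_adj_iff]

theorem fVec_eq (e : G ≃g G') (k : ℕ) : fVec G k = fVec G' k :=
  Nat.card_congr <| e.toEquiv.finsetCongr.subtypeEquiv fun _ => e.isNClique_map_iff.symm

theorem eulerChar_eq (e : G ≃g G') : eulerChar G = eulerChar G' := by
  simp only [eulerChar, Nat.card_congr e.toEquiv, e.fVec_eq]

def induceNeighborSet (e : G ≃g G') (x : α) :
    G.induce (G.neighborSet x) ≃g G'.induce (G'.neighborSet (e x)) :=
  e.induce <| e.toEquiv.bijOn fun _ => e.map_adj_iff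

end SimpleGraph.Iso

theorem DS.of_iso {α β : Type} {G : SimpleGraph α} {G' : SimpleGraph β} (e : G ≃g G') :
    ∀ {m : ℕ}, DS m G → DS m G'
  | 0, h => @Function.isEmpty _ _ h e.symm
  | _ + 1, ⟨hχ, hS⟩ => ⟨e.eulerChar_eq ▸ hχ, fun y => by
      simpa using DS.of_iso (e.symm.induceNeighborSet y).symm (hS (e.symm y))⟩

section zykovJoin

variable {α β : Type} {G : SimpleGraph α} {H : SimpleGraph β}

@[simp]
theorem zykovJoin_adj_inl_inl {a a' : α} :
    (zykovJoin G H).Adj (.inl a) (.inl a') ↔ G.Adj a a' := by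
  simp [zykovJoin]

@[simp]
theorem zykovJoin_adj_inr_inr {b b' : β} :
    (zykovJoin G H).Adj (.inr b) (.inr b') ↔ H.Adj b b' := by
  simp [zykovJoin]

@[simp]
theorem zykovJoin_adj_inl_inr (a : α) (b : β) : (zykovJoin G H).Adj (.inl a) (.inr b) := by
  simp [zykovJoin]

@[simp]
theorem zykovJoin_adj_inr_inl (b : β) (a : α) : (zykovJoin G H).Adj (.inr b) (.inl a) := by
  simp [zykovJoin]

theorem isClique_zykovJoin_iff {s : Set (α ⊕ β)} :
    (zykovJoin G H).IsClique s ↔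
      G.IsClique (Sum.inl ⁻¹' s) ∧ H.IsClique (Sum.inr ⁻¹' s) := by
  refine ⟨fun h => ⟨?_, ?_⟩, fun ⟨hG, hH⟩ => ?_⟩
  · exact fun a ha a' ha' hne => zykovJoin_adj_inl_inl.1 (h ha ha' (by simpa))
  · exact fun b hb b' hb' hne => zykovJoin_adj_inr_inr.1 (h hb hb' (by simpa))
  rintro (a | b) hx (a' | b') hy hne
  · exact zykovJoin_adj_inl_inl.2 (hG hx hy (by simpa using hne))
  · exact zykovJoin_adj_inl_inr a b'
  · exact zykovJoin_adj_inr_inl b a'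
  · exact zykovJoin_adj_inr_inr.2 (hH hx hy (by simpa using hne))

end zykovJoin

open Finset

theorem fVec_eq_card_cliqueFinset {α : Type} [Fintype α] (G : SimpleGraph α) [DecidableEq α]
    [DecidableRel G.Adj] (k : ℕ) : fVec G k = #(G.cliqueFinset (k + 1)) := by
  rw [fVec, Nat.card_eq_fintype_card, Fintype.card_subtype]
  rfl

open Classical in
theorem one_sub_eulerChar_eq_sum_isClique {α : Type} [Fintype α] (G : SimpleGraph α) :
    1 - eulerChar G = ∑ s ∈ univ.filter (fun s : Finset α => G.IsClique ↑s), (-1 : ℤ) ^ #s := by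
  have hcard : ∀ s ∈ univ.filter (fun s : Finset α => G.IsClique ↑s),
      #s ∈ range (Fintype.card α + 1) :=
    fun s _ => mem_range.2 (Nat.lt_succ_of_le (card_le_univ s))
  have hfiber : ∀ j, (univ.filter fun s : Finset α => G.IsClique ↑s).filter (#· = j) =
      G.cliqueFinset j := fun j => by
    ext s; simp [isNClique_iff]
  have hlayer : ∀ k, ∑ s ∈ G.cliqueFinset k, (-1 : ℤ) ^ #s = (-1) ^ k * #(G.cliqueFinset k) :=
    fun k => by
      rw [sum_congr rfl fun s hs => by rw [(mem_cliqueFinset_iff.1 hs).card_eq], sum_const,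
        nsmul_eq_mul, mul_comm]
  have hempty : G.cliqueFinset 0 = {∅} := by ext s; simp
  rw [← sum_fiberwise_of_maps_to hcard, sum_range_succ', eulerChar, Nat.card_eq_fintype_card]
  simp only [hfiber, hlayer, hempty, fVec_eq_card_cliqueFinset, pow_succ, mul_neg_one, neg_mul,
    sum_neg_distrib, sum_singleton, card_empty, pow_zero]
  ring

open Classical in
theorem one_sub_eulerChar_zykovJoin {α β : Type} [Fintype α] [Fintype β] (G : SimpleGraph α)
    (H : SimpleGraph β) :
    1 - eulerChar (zykovJoin G H) = (1 - eulerChar G) * (1 - eulerChar H) := by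
  simp only [one_sub_eulerChar_eq_sum_isClique, sum_filter, sum_mul_sum, ← Fintype.sum_prod_type']
  refine Fintype.sum_equiv sumEquiv.toEquiv _ _ fun u => ?_
  have hinl : Sum.inl ⁻¹' (u : Set (α ⊕ β)) = u.toLeft := by ext; simp
  have hinr : Sum.inr ⁻¹' (u : Set (α ⊕ β)) = u.toRight := by ext; simp
  simp only [isClique_zykovJoin_iff, hinl, hinr, ite_zero_mul_ite_zero, ← pow_add,
    RelIso.coe_fn_toEquiv, sumEquiv_apply_fst, sumEquiv_apply_snd, card_toLeft_add_card_toRight]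

section zykovJoinIso

variable {α β : Type} (G : SimpleGraph α) (H : SimpleGraph β)

def zykovJoinIsoOfIsEmptyLeft [IsEmpty α] : zykovJoin G H ≃g H where
  toEquiv := Equiv.emptySum α β
  map_rel_iff' := by
    rintro (a | b) (a' | b')
    all_goals first | exact isEmptyElim ‹α› | simp

def zykovJoinIsoOfIsEmptyRight [IsEmpty β] : zykovJoin G H ≃g G where
  toEquiv := Equiv.sumEmpty α β
  map_rel_iff' := by
    rintro (a | b) (a' | b')
    all_goals first | exact isEmptyElim ‹β› | simp

def zykovJoinInduceNeighborSetInl (a : α) :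
    (zykovJoin G H).induce ((zykovJoin G H).neighborSet (.inl a)) ≃g
      zykovJoin (G.induce (G.neighborSet a)) H where
  toEquiv := Equiv.subtypeSum.trans <| .sumCongr (.subtypeEquivRight fun _ => zykovJoin_adj_inl_inl)
    (.subtypeUnivEquiv (zykovJoin_adj_inl_inr a))
  map_rel_iff' := by
    rintro ⟨a₁ | b₁, h₁⟩ ⟨a₂ | b₂, h₂⟩ <;> exact Iff.rfl

def zykovJoinInduceNeighborSetInr (b : β) :
    (zykovJoin G H).induce ((zykovJoin G H).neighborSet (.inr b)) ≃g
      zykovJoin G (H.induce (H.neighborSet b)) where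
  toEquiv := Equiv.subtypeSum.trans <| .sumCongr (.subtypeUnivEquiv (zykovJoin_adj_inr_inl b))
    (.subtypeEquivRight fun _ => zykovJoin_adj_inr_inr)
  map_rel_iff' := by
    rintro ⟨a₁ | b₁, h₁⟩ ⟨a₂ | b₂, h₂⟩ <;> exact Iff.rfl

end zykovJoinIso

/-- The Dehn–Sommerville classes are closed under the Zykov join:
if `G ∈ X_{m-1}` and `H ∈ X_{n-1}`, then `G + H ∈ X_{(m-1)+(n-1)+1}`,
i.e. `DS m G → DS n H → DS (m+n) (G + H)`. -/
theorem DS_zykovJoin {α β : Type} [Fintype α] [Fintype β]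
    (G : SimpleGraph α) (H : SimpleGraph β) (m n : ℕ)
    (hG : DS m G) (hH : DS n H) : DS (m + n) (zykovJoin G H) :=
  match m, n, hG, hH with
  | 0, n, (_ : IsEmpty α), hH => by
    simpa using hH.of_iso (zykovJoinIsoOfIsEmptyLeft G H).symm
  | m + 1, 0, hG, (_ : IsEmpty β) => hG.of_iso (zykovJoinIsoOfIsEmptyRight G H).symm
  | m + 1, n + 1, ⟨hχG, hSG⟩, ⟨hχH, hSH⟩ => by
    refine ⟨?_, ?_⟩
    · show eulerChar _ = 1 + (-1) ^ (m + 1 + n)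
      have h := one_sub_eulerChar_zykovJoin G H
      rw [hχG, hχH] at h
      linear_combination -h
    · rintro (a | b)
      · have := Fintype.ofFinite (G.neighborSet a)
        have h := DS_zykovJoin _ H m (n + 1) (hSG a) ⟨hχH, hSH⟩
        rw [show m + (n + 1) = m + 1 + n by omega] at h
        exact h.of_iso (zykovJoinInduceNeighborSetInl G H a).symm
      · have := Fintype.ofFinite (H.neighborSet b)
        exact (DS_zykovJoin G _ (m + 1) n ⟨hχG, hSG⟩ (hSH b)).of_iso
          (zykovJoinInduceNeighborSetInr G H b).symm
termination_by m + n
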